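/- arXiv:2001.03646 — 7 statements merged into one kernel-verified Lean document; each statement's English description precedes it below -/
import Mathlib

section
/- Let t^B, t^C > 0 and b^B, b^C ≥ 0 be real numbers with 4·t^B·t^C > (b^B + b^C)², and let U₀^B, U₀^C, f^B, f^C be real numbers. Define the equilibrium prices p^B* = (−(b^B)²·f^B − (b^C)²·U₀^B + (2·t^B·t^C − b^B·b^C)·(f^B + U₀^B) + t^B·(b^B − b^C)·(U₀^C − f^C))/(4·t^B·t^C − (b^B + b^C)²) and p^C* = (−(b^C)²·f^C − (b^B)²·U₀^C + (2·t^B·t^C − b^B·b^C)·(f^C + U₀^C) + t^C·(b^B − b^C)·(f^B − U₀^B))/(4·t^B·t^C − (b^B + b^C)²). Then (p^B*, p^C*) is a global maximizer of the monopoly profit function R over ℝ²: for all (p^B, p^C) ∈ ℝ², R(p^B, p^C) ≤ R(p^B*, p^C*). -/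
/-!
Multiplied by the positive determinant `tB * tC - bB * bC` of the demand system, the profit is
a quadratic polynomial in the prices whose quadratic part is minus the binary form
`tC x² + (bB + bC) x y + tB y²`. The condition `4 tB tC > (bB + bC)²` makes this form positive
definite, so the profit is concave, and the equilibrium prices solve its first-order conditions.
Hence the profit at any price pair falls short of the equilibrium profit by the form evaluated at
the price deviation, which is nonnegative.
-/

theorem binary_quadratic_nonneg {a b c : ℝ} (ha : 0 < a) (hd : discrim a b c ≤ 0) (x y : ℝ) :
    0 ≤ a * x ^ 2 + b * x * y + c * y ^ 2 := by
  have hsq : 4 * a * (a * x ^ 2 + b * x * y + c * y ^ 2)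
      = (2 * a * x + b * y) ^ 2 + (-discrim a b c) * y ^ 2 := by
    unfold discrim; ring
  have hnonneg : 0 ≤ 4 * a * (a * x ^ 2 + b * x * y + c * y ^ 2) := by
    rw [hsq]; have := neg_nonneg.mpr hd; positivity
  exact nonneg_of_mul_nonneg_right hnonneg (by positivity)

namespace MonopolyCSP

variable (tB tC bB bC U0B U0C fB fC : ℝ)

/-- The platform's profit multiplied by the determinant `tB * tC - bB * bC` of the demand
system. -/
def scaledProfit (pB pC : ℝ) : ℝ :=
  (pB - fB) * (bB * (U0C - pC) + tC * (U0B - pB))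
    + (pC - fC) * (bC * (U0B - pB) + tB * (U0C - pC))

/-- The first-order conditions `∂/∂pB = 0` and `∂/∂pC = 0` of `scaledProfit`. -/
def IsCriticalPrice (qB qC : ℝ) : Prop :=
  2 * tC * qB + (bB + bC) * qC = bB * U0C + tC * U0B + tC * fB + bC * fC ∧
    (bB + bC) * qB + 2 * tB * qC = bC * U0B + tB * U0C + tB * fC + bB * fB

variable {tB tC bB bC U0B U0C fB fC}

theorem isCriticalPrice_of_eq {pBstar pCstar : ℝ} (hdisc : 4 * tB * tC - (bB + bC) ^ 2 ≠ 0)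
    (hpB : pBstar = (-(bB ^ 2) * fB - bC ^ 2 * U0B
        + (2 * tB * tC - bB * bC) * (fB + U0B)
        + tB * (bB - bC) * (U0C - fC)) / (4 * tB * tC - (bB + bC) ^ 2))
    (hpC : pCstar = (-(bC ^ 2) * fC - bB ^ 2 * U0C
        + (2 * tB * tC - bB * bC) * (fC + U0C)
        + tC * (bB - bC) * (fB - U0B)) / (4 * tB * tC - (bB + bC) ^ 2)) :
    IsCriticalPrice tB tC bB bC U0B U0C fB fC pBstar pCstar := by
  subst hpB hpC
  constructor <;>
    · rw [mul_div_assoc', mul_div_assoc', ← add_div, div_eq_iff hdisc]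
      ring

theorem scaledProfit_sub_of_isCriticalPrice {qB qC : ℝ}
    (hq : IsCriticalPrice tB tC bB bC U0B U0C fB fC qB qC) (pB pC : ℝ) :
    scaledProfit tB tC bB bC U0B U0C fB fC qB qC - scaledProfit tB tC bB bC U0B U0C fB fC pB pC
      = tB * (pC - qC) ^ 2 + (bB + bC) * (pC - qC) * (pB - qB) + tC * (pB - qB) ^ 2 := by
  unfold scaledProfit
  linear_combination (pB - qB) * hq.1 + (pC - qC) * hq.2

theorem scaledProfit_le_of_isCriticalPrice (htB : 0 < tB)
    (hdisc : (bB + bC) ^ 2 ≤ 4 * tB * tC) {qB qC : ℝ}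
    (hq : IsCriticalPrice tB tC bB bC U0B U0C fB fC qB qC) (pB pC : ℝ) :
    scaledProfit tB tC bB bC U0B U0C fB fC pB pC ≤ scaledProfit tB tC bB bC U0B U0C fB fC qB qC := by
  rw [← sub_nonneg, scaledProfit_sub_of_isCriticalPrice hq]
  exact binary_quadratic_nonneg htB (by rw [discrim]; linarith) _ _

end MonopolyCSP

open MonopolyCSP in
theorem monopoly_equilibrium_prices_maximize_general
    (tB tC bB bC U0B U0C fB fC : ℝ)
    (htB : 0 < tB)
    (hA1 : 4 * tB * tC > (bB + bC) ^ 2)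
    (pBstar pCstar : ℝ)
    (hpB : pBstar = (-(bB ^ 2) * fB - bC ^ 2 * U0B
        + (2 * tB * tC - bB * bC) * (fB + U0B)
        + tB * (bB - bC) * (U0C - fC)) / (4 * tB * tC - (bB + bC) ^ 2))
    (hpC : pCstar = (-(bC ^ 2) * fC - bB ^ 2 * U0C
        + (2 * tB * tC - bB * bC) * (fC + U0C)
        + tC * (bB - bC) * (fB - U0B)) / (4 * tB * tC - (bB + bC) ^ 2)) :
    ∀ pB pC : ℝ,
      (pB - fB) * (bB * (U0C - pC) + tC * (U0B - pB)) / (tB * tC - bB * bC)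
        + (pC - fC) * (bC * (U0B - pB) + tB * (U0C - pC)) / (tB * tC - bB * bC)
      ≤ (pBstar - fB) * (bB * (U0C - pCstar) + tC * (U0B - pBstar)) / (tB * tC - bB * bC)
        + (pCstar - fC) * (bC * (U0B - pBstar) + tB * (U0C - pCstar)) / (tB * tC - bB * bC) := by
  intro pB pC
  have hdet : 0 < tB * tC - bB * bC := by nlinarith [sq_nonneg (bB - bC)]
  have hcrit := isCriticalPrice_of_eq (by linarith) hpB hpC
  rw [← add_div, ← add_div, div_le_div_iff_of_pos_right hdet]
  exact scaledProfit_le_of_isCriticalPrice htB hA1.le hcrit pB pC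

/-- The equilibrium prices of the monopoly CSP model are a global maximizer of
the profit function. -/
theorem monopoly_equilibrium_prices_maximize
    (tB tC bB bC U0B U0C fB fC : ℝ)
    (htB : 0 < tB) (htC : 0 < tC) (hbB : 0 ≤ bB) (hbC : 0 ≤ bC)
    (hA1 : 4 * tB * tC > (bB + bC) ^ 2)
    (pBstar pCstar : ℝ)
    (hpB : pBstar = (-(bB ^ 2) * fB - bC ^ 2 * U0B
        + (2 * tB * tC - bB * bC) * (fB + U0B)
        + tB * (bB - bC) * (U0C - fC)) / (4 * tB * tC - (bB + bC) ^ 2))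
    (hpC : pCstar = (-(bC ^ 2) * fC - bB ^ 2 * U0C
        + (2 * tB * tC - bB * bC) * (fC + U0C)
        + tC * (bB - bC) * (fB - U0B)) / (4 * tB * tC - (bB + bC) ^ 2)) :
    ∀ pB pC : ℝ,
      (pB - fB) * (bB * (U0C - pC) + tC * (U0B - pB)) / (tB * tC - bB * bC)
        + (pC - fC) * (bC * (U0B - pB) + tB * (U0C - pC)) / (tB * tC - bB * bC)
      ≤ (pBstar - fB) * (bB * (U0C - pCstar) + tC * (U0B - pBstar)) / (tB * tC - bB * bC)
        + (pCstar - fC) * (bC * (U0B - pBstar) + tB * (U0C - pCstar)) / (tB * tC - bB * bC) :=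
  monopoly_equilibrium_prices_maximize_general tB tC bB bC U0B U0C fB fC htB hA1 pBstar pCstar hpB
    hpC
end

section
/- Let t^B, t^C > 0 and b^B, b^C ≥ 0 be real numbers with 4·t^B·t^C > (b^B + b^C)², and let U₀^B, U₀^C, f^B, f^C be real numbers. At the equilibrium prices p^B* = (−(b^B)²·f^B − (b^C)²·U₀^B + (2·t^B·t^C − b^B·b^C)·(f^B + U₀^B) + t^B·(b^B − b^C)·(U₀^C − f^C))/(4·t^B·t^C − (b^B + b^C)²) and p^C* = (−(b^C)²·f^C − (b^B)²·U₀^C + (2·t^B·t^C − b^B·b^C)·(f^C + U₀^C) + t^C·(b^B − b^C)·(f^B − U₀^B))/(4·t^B·t^C − (b^B + b^C)²), the demand functions take the values q^B = ((U₀^C − f^C)·(b^B + b^C) + 2·t^C·(U₀^B − f^B))/(4·t^B·t^C − (b^B + b^C)²) and q^C = ((b^B + b^C)·(U₀^B − f^B) + 2·t^B·(U₀^C − f^C))/(4·t^B·t^C − (b^B + b^C)²). -/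
/-!
The demands are the solution, by Cramer's rule, of the inverse-demand system
`U₀ᴮ - pᴮ = tᴮ qᴮ - bᴮ qᶜ`, `U₀ᶜ - pᶜ = tᶜ qᶜ - bᶜ qᴮ`, whose determinant is `tᴮ tᶜ - bᴮ bᶜ`.
So it suffices to check that the claimed quantities solve this system at the equilibrium
prices, a rational identity with denominator `4 tᴮ tᶜ - (bᴮ + bᶜ)² > 0`. The determinant is
positive too, since `4 bᴮ bᶜ ≤ (bᴮ + bᶜ)² < 4 tᴮ tᶜ`.
-/

lemma cramer_two {K : Type*} [Field K] {a b c e u v x y : K} (hdet : a * e - b * c ≠ 0)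
    (hu : u = a * x - b * y) (hv : v = e * y - c * x) :
    (b * v + e * u) / (a * e - b * c) = x ∧ (c * u + a * v) / (a * e - b * c) = y := by
  subst hu hv
  constructor <;> (rw [div_eq_iff hdet]; ring)

lemma mul_lt_mul_of_sq_add_lt_four_mul {R : Type*} [CommRing R] [LinearOrder R]
    [IsStrictOrderedRing R] {a b c d : R} (h : (c + d) ^ 2 < 4 * a * b) : c * d < a * b := by
  have := four_mul_le_sq_add c d
  linarith

section Equilibrium

variable {tB tC bB bC U0B U0C fB fC : ℝ}

lemma equilibrium_inverse_demand_B (hD : 4 * tB * tC - (bB + bC) ^ 2 ≠ 0) :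
    U0B - (-(bB ^ 2) * fB - bC ^ 2 * U0B + (2 * tB * tC - bB * bC) * (fB + U0B)
        + tB * (bB - bC) * (U0C - fC)) / (4 * tB * tC - (bB + bC) ^ 2)
      = tB * (((U0C - fC) * (bB + bC) + 2 * tC * (U0B - fB)) / (4 * tB * tC - (bB + bC) ^ 2))
        - bB * (((bB + bC) * (U0B - fB) + 2 * tB * (U0C - fC))
          / (4 * tB * tC - (bB + bC) ^ 2)) := by
  -- keep `field_simp` from expanding the denominator, which defeats the cancellation
  generalize hDdef : 4 * tB * tC - (bB + bC) ^ 2 = D at hD ⊢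
  field_simp
  rw [← hDdef]
  ring

lemma equilibrium_inverse_demand_C (hD : 4 * tB * tC - (bB + bC) ^ 2 ≠ 0) :
    U0C - (-(bC ^ 2) * fC - bB ^ 2 * U0C + (2 * tB * tC - bB * bC) * (fC + U0C)
        + tC * (bB - bC) * (fB - U0B)) / (4 * tB * tC - (bB + bC) ^ 2)
      = tC * (((bB + bC) * (U0B - fB) + 2 * tB * (U0C - fC)) / (4 * tB * tC - (bB + bC) ^ 2))
        - bC * (((U0C - fC) * (bB + bC) + 2 * tC * (U0B - fB))
          / (4 * tB * tC - (bB + bC) ^ 2)) := by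
  generalize hDdef : 4 * tB * tC - (bB + bC) ^ 2 = D at hD ⊢
  field_simp
  rw [← hDdef]
  ring

end Equilibrium

theorem monopoly_equilibrium_demands_general
    (tB tC bB bC U0B U0C fB fC : ℝ)
    (hA1 : 4 * tB * tC > (bB + bC) ^ 2)
    (pBstar pCstar : ℝ)
    (hpB : pBstar = (-(bB ^ 2) * fB - bC ^ 2 * U0B
        + (2 * tB * tC - bB * bC) * (fB + U0B)
        + tB * (bB - bC) * (U0C - fC)) / (4 * tB * tC - (bB + bC) ^ 2))
    (hpC : pCstar = (-(bC ^ 2) * fC - bB ^ 2 * U0C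
        + (2 * tB * tC - bB * bC) * (fC + U0C)
        + tC * (bB - bC) * (fB - U0B)) / (4 * tB * tC - (bB + bC) ^ 2)) :
    (bB * (U0C - pCstar) + tC * (U0B - pBstar)) / (tB * tC - bB * bC)
      = ((U0C - fC) * (bB + bC) + 2 * tC * (U0B - fB)) / (4 * tB * tC - (bB + bC) ^ 2) ∧
    (bC * (U0B - pBstar) + tB * (U0C - pCstar)) / (tB * tC - bB * bC)
      = ((bB + bC) * (U0B - fB) + 2 * tB * (U0C - fC)) / (4 * tB * tC - (bB + bC) ^ 2) := by
  have hD : 4 * tB * tC - (bB + bC) ^ 2 ≠ 0 := (sub_pos.mpr hA1).ne'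
  have hdet : tB * tC - bB * bC ≠ 0 := (sub_pos.mpr (mul_lt_mul_of_sq_add_lt_four_mul hA1)).ne'
  subst hpB hpC
  exact cramer_two hdet (equilibrium_inverse_demand_B hD) (equilibrium_inverse_demand_C hD)

/-- At the monopoly equilibrium prices, the demand functions take the stated
closed-form values. -/
theorem monopoly_equilibrium_demands
    (tB tC bB bC U0B U0C fB fC : ℝ)
    (htB : 0 < tB) (htC : 0 < tC) (hbB : 0 ≤ bB) (hbC : 0 ≤ bC)
    (hA1 : 4 * tB * tC > (bB + bC) ^ 2)
    (pBstar pCstar : ℝ)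
    (hpB : pBstar = (-(bB ^ 2) * fB - bC ^ 2 * U0B
        + (2 * tB * tC - bB * bC) * (fB + U0B)
        + tB * (bB - bC) * (U0C - fC)) / (4 * tB * tC - (bB + bC) ^ 2))
    (hpC : pCstar = (-(bC ^ 2) * fC - bB ^ 2 * U0C
        + (2 * tB * tC - bB * bC) * (fC + U0C)
        + tC * (bB - bC) * (fB - U0B)) / (4 * tB * tC - (bB + bC) ^ 2)) :
    (bB * (U0C - pCstar) + tC * (U0B - pBstar)) / (tB * tC - bB * bC)
      = ((U0C - fC) * (bB + bC) + 2 * tC * (U0B - fB)) / (4 * tB * tC - (bB + bC) ^ 2) ∧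
    (bC * (U0B - pBstar) + tB * (U0C - pCstar)) / (tB * tC - bB * bC)
      = ((bB + bC) * (U0B - fB) + 2 * tB * (U0C - fC)) / (4 * tB * tC - (bB + bC) ^ 2) :=
  monopoly_equilibrium_demands_general tB tC bB bC U0B U0C fB fC hA1 pBstar pCstar hpB hpC
end

section
/- Let t^B, t^C > 0 and b^B, b^C ≥ 0 be real numbers with 4·t^B·t^C > (b^B + b^C)², and let U₀^B, U₀^C, f^B, f^C be real numbers. At the profit-maximizing equilibrium prices p^B*, p^C* given by the formulas p^B* = (−(b^B)²·f^B − (b^C)²·U₀^B + (2·t^B·t^C − b^B·b^C)·(f^B + U₀^B) + t^B·(b^B − b^C)·(U₀^C − f^C))/(4·t^B·t^C − (b^B + b^C)²) and p^C* = (−(b^C)²·f^C − (b^B)²·U₀^C + (2·t^B·t^C − b^B·b^C)·(f^C + U₀^C) + t^C·(b^B − b^C)·(f^B − U₀^B))/(4·t^B·t^C − (b^B + b^C)²), the monopoly platform's profit equals R(p^B*, p^C*) = ((b^B + b^C)·(f^B − U₀^B)·(f^C − U₀^C) + t^C·(f^B − U₀^B)² + t^B·(f^C − U₀^C)²)/(4·t^B·t^C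 − (b^B + b^C)²). -/
/-! At the equilibrium prices each demand is linear in the net intrinsic benefits
`aᵏ = U₀ᵏ - fᵏ`: with `Δ = 4 tᴮ tᶜ - (bᴮ + bᶜ)²`, `qᴮ* = (2 tᶜ aᴮ + (bᴮ + bᶜ) aᶜ) / Δ` and
symmetrically for `qᶜ*`, the denominator `tᴮ tᶜ - bᴮ bᶜ` of the demand system cancelling out.
The profit `(pᴮ* - fᴮ) qᴮ* + (pᶜ* - fᶜ) qᶜ*` then reduces to the stated quadratic form in `a`
over `Δ`. -/

section EquilibriumDemand

variable {tB tC bB bC U0B U0C fB fC pB pC : ℝ}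

theorem equilibrium_demand_B (hΔ : 4 * tB * tC - (bB + bC) ^ 2 ≠ 0)
    (hD : tB * tC - bB * bC ≠ 0)
    (hpB : pB = (-(bB ^ 2) * fB - bC ^ 2 * U0B
        + (2 * tB * tC - bB * bC) * (fB + U0B)
        + tB * (bB - bC) * (U0C - fC)) / (4 * tB * tC - (bB + bC) ^ 2))
    (hpC : pC = (-(bC ^ 2) * fC - bB ^ 2 * U0C
        + (2 * tB * tC - bB * bC) * (fC + U0C)
        + tC * (bB - bC) * (fB - U0B)) / (4 * tB * tC - (bB + bC) ^ 2)) :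
    (bB * (U0C - pC) + tC * (U0B - pB)) / (tB * tC - bB * bC)
      = (2 * tC * (U0B - fB) + (bB + bC) * (U0C - fC)) / (4 * tB * tC - (bB + bC) ^ 2) := by
  rw [div_eq_div_iff hD hΔ]
  linear_combination -tC * (eq_div_iff hΔ).1 hpB - bB * (eq_div_iff hΔ).1 hpC

theorem equilibrium_demand_C (hΔ : 4 * tB * tC - (bB + bC) ^ 2 ≠ 0)
    (hD : tB * tC - bB * bC ≠ 0)
    (hpB : pB = (-(bB ^ 2) * fB - bC ^ 2 * U0B
        + (2 * tB * tC - bB * bC) * (fB + U0B)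
        + tB * (bB - bC) * (U0C - fC)) / (4 * tB * tC - (bB + bC) ^ 2))
    (hpC : pC = (-(bC ^ 2) * fC - bB ^ 2 * U0C
        + (2 * tB * tC - bB * bC) * (fC + U0C)
        + tC * (bB - bC) * (fB - U0B)) / (4 * tB * tC - (bB + bC) ^ 2)) :
    (bC * (U0B - pB) + tB * (U0C - pC)) / (tB * tC - bB * bC)
      = (2 * tB * (U0C - fC) + (bB + bC) * (U0B - fB)) / (4 * tB * tC - (bB + bC) ^ 2) := by
  have h := equilibrium_demand_B (tB := tC) (tC := tB) (bB := bC) (bC := bB)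
    (U0B := U0C) (U0C := U0B) (fB := fC) (fC := fB)
    (by rwa [mul_right_comm 4 tC, add_comm bC]) (by rwa [mul_comm tC, mul_comm bC])
    (hpC.trans (by ring)) (hpB.trans (by ring))
  linear_combination h

end EquilibriumDemand

theorem monopoly_equilibrium_profit_general
    (tB tC bB bC U0B U0C fB fC : ℝ)
    (hA1 : 4 * tB * tC > (bB + bC) ^ 2)
    (pBstar pCstar : ℝ)
    (hpB : pBstar = (-(bB ^ 2) * fB - bC ^ 2 * U0B
        + (2 * tB * tC - bB * bC) * (fB + U0B)
        + tB * (bB - bC) * (U0C - fC)) / (4 * tB * tC - (bB + bC) ^ 2))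
    (hpC : pCstar = (-(bC ^ 2) * fC - bB ^ 2 * U0C
        + (2 * tB * tC - bB * bC) * (fC + U0C)
        + tC * (bB - bC) * (fB - U0B)) / (4 * tB * tC - (bB + bC) ^ 2)) :
    (pBstar - fB) * ((bB * (U0C - pCstar) + tC * (U0B - pBstar)) / (tB * tC - bB * bC))
      + (pCstar - fC) * ((bC * (U0B - pBstar) + tB * (U0C - pCstar)) / (tB * tC - bB * bC))
    = ((bB + bC) * (fB - U0B) * (fC - U0C) + tC * (fB - U0B) ^ 2 + tB * (fC - U0C) ^ 2)
        / (4 * tB * tC - (bB + bC) ^ 2) := by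
  have hΔ : 4 * tB * tC - (bB + bC) ^ 2 ≠ 0 := (sub_pos.2 hA1).ne'
  have hD : tB * tC - bB * bC ≠ 0 :=
    (show 0 < tB * tC - bB * bC by linarith [four_mul_le_sq_add bB bC]).ne'
  rw [equilibrium_demand_B hΔ hD hpB hpC, equilibrium_demand_C hΔ hD hpB hpC,
    mul_div_assoc', mul_div_assoc', ← add_div, div_left_inj' hΔ]
  apply mul_right_cancel₀ hΔ
  linear_combination (2 * tC * (U0B - fB) + (bB + bC) * (U0C - fC)) * (eq_div_iff hΔ).1 hpB
    + (2 * tB * (U0C - fC) + (bB + bC) * (U0B - fB)) * (eq_div_iff hΔ).1 hpC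

/-- At the monopoly equilibrium prices, the platform's profit takes the stated
closed-form value. -/
theorem monopoly_equilibrium_profit
    (tB tC bB bC U0B U0C fB fC : ℝ)
    (htB : 0 < tB) (htC : 0 < tC) (hbB : 0 ≤ bB) (hbC : 0 ≤ bC)
    (hA1 : 4 * tB * tC > (bB + bC) ^ 2)
    (pBstar pCstar : ℝ)
    (hpB : pBstar = (-(bB ^ 2) * fB - bC ^ 2 * U0B
        + (2 * tB * tC - bB * bC) * (fB + U0B)
        + tB * (bB - bC) * (U0C - fC)) / (4 * tB * tC - (bB + bC) ^ 2))
    (hpC : pCstar = (-(bC ^ 2) * fC - bB ^ 2 * U0C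
        + (2 * tB * tC - bB * bC) * (fC + U0C)
        + tC * (bB - bC) * (fB - U0B)) / (4 * tB * tC - (bB + bC) ^ 2)) :
    (pBstar - fB) * ((bB * (U0C - pCstar) + tC * (U0B - pBstar)) / (tB * tC - bB * bC))
      + (pCstar - fC) * ((bC * (U0B - pBstar) + tB * (U0C - pCstar)) / (tB * tC - bB * bC))
    = ((bB + bC) * (fB - U0B) * (fC - U0C) + tC * (fB - U0B) ^ 2 + tB * (fC - U0C) ^ 2)
        / (4 * tB * tC - (bB + bC) ^ 2) :=
  monopoly_equilibrium_profit_general tB tC bB bC U0B U0C fB fC hA1 pBstar pCstar hpB hpC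
end

section
/- (Lemma 1: no multi-homing under condition (B2).) Let p_W^B ≥ 0, p_N^B ≥ 0, q_W^C ≥ 0, q_N^C ≥ 0, α_W, α_N, U₀^B, t^B be real numbers with t^B > α_W·q_W^C + α_N·q_N^C. Define, for a worksite located at x ∈ [0,1], the single-homing utilities U_W^B(x) = U₀^B − p_W^B − t^B·x + α_W·q_W^C and U_N^B(x) = U₀^B − p_N^B − t^B·(1 − x) + α_N·q_N^C, and the multi-homing utility U_{NW}^B = U₀^B − (p_W^B + p_N^B) − t^B + α_W·q_W^C + α_N·q_N^C. Then for every x ∈ [0,1], U_{NW}^B < max(U_W^B(x), U_N^B(x)); that is, no worksite prefers multi-homing to its best single-homing option at any non-negative prices. -/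
theorem lt_max_of_add_self_lt_add {α : Type*} [Add α] [LinearOrder α] [AddLeftMono α]
    [AddRightMono α] {u a b : α} (h : u + u < a + b) : u < max a b := by
  by_contra! hle
  exact h.not_ge (add_le_add ((le_max_left a b).trans hle) ((le_max_right a b).trans hle))

theorem no_multihoming_under_B2_general
    (pWB pNB qWC qNC αW αN U0B tB : ℝ)
    (hpWB : 0 ≤ pWB) (hpNB : 0 ≤ pNB)
    (hB2 : tB > αW * qWC + αN * qNC) :
    ∀ x ∈ Set.Icc (0 : ℝ) 1,
      U0B - (pWB + pNB) - tB + αW * qWC + αN * qNC <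
        max (U0B - pWB - tB * x + αW * qWC)
            (U0B - pNB - tB * (1 - x) + αN * qNC) := by
  intro x _
  apply lt_max_of_add_self_lt_add
  -- The two single-homing utilities exceed the multi-homing one by amounts summing to
  -- pW + pN + tB - αW qW - αN qN > 0; the location x cancels.
  linarith

/-- Lemma 1: under condition (B2), no worksite prefers multi-homing to its best
single-homing option at any non-negative prices. -/
theorem no_multihoming_under_B2
    (pWB pNB qWC qNC αW αN U0B tB : ℝ)
    (hpWB : 0 ≤ pWB) (hpNB : 0 ≤ pNB) (hqWC : 0 ≤ qWC) (hqNC : 0 ≤ qNC)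
    (hB2 : tB > αW * qWC + αN * qNC) :
    ∀ x ∈ Set.Icc (0 : ℝ) 1,
      U0B - (pWB + pNB) - tB + αW * qWC + αN * qNC <
        max (U0B - pWB - tB * x + αW * qWC)
            (U0B - pNB - tB * (1 - x) + αN * qNC) :=
  no_multihoming_under_B2_general pWB pNB qWC qNC αW αN U0B tB hpWB hpNB hB2
end

section
/- (Proposition 3, equilibrium commuter prices as mutual best responses.) Let t^C > 0 and α_W, α_N, f_W^B, f_N^B, f_W^C, f_N^C be real numbers. Define p_W* = (f_N^C − α_N)/3 + 2·(f_W^C − α_W)/3 + t^C and p_N* = 2·(f_N^C − α_N)/3 + (f_W^C − α_W)/3 + t^C. Then p_W* maximizes the WF CSP's profit given p_N*: for every p ∈ ℝ, −f_W^B + (p + α_W − f_W^C)·(1/2 + (p_N* − p)/(2·t^C)) ≤ −f_W^B + (p_W* + α_W − f_W^C)·(1/2 + (p_N* − p_W*)/(2·t^C)); and symmetrically p_N* maximizes the NWF CSP's profit given p_W*: for every p ∈ ℝ, −f_N^B + (p + α_N − f_N^C)·(1/2 + (p_W* − p)/(2·t^C)) ≤ −f_N^B + (p_N* + α_N − f_N^C)·(1/2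 + (p_W* − p_N*)/(2·t^C)). -/
/-!
With a Hotelling demand share `1/2 + (q - p)/(2t)` against a rival price `q`, the profit of a firm
with marginal cost `c` is a concave quadratic in its own price `p`; completing the square shows it
falls short of its value at `p₀ = (c + q + t)/2` by exactly `(p - p₀)²/(2t)`. The prices of the
proposition are the fixed point of the two best-response maps `p_W = (c_W + p_N + t)/2`,
`p_N = (c_N + p_W + t)/2` with net costs `c_i = f_i^C - α_i`.
-/

lemma hotelling_profit_sub_eq {t : ℝ} (ht : t ≠ 0) (c q p p₀ : ℝ) (hp₀ : p₀ = (c + q + t) / 2) :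
    (p₀ - c) * (1 / 2 + (q - p₀) / (2 * t)) - (p - c) * (1 / 2 + (q - p) / (2 * t))
      = (p - p₀) ^ 2 / (2 * t) := by
  subst hp₀
  field_simp
  ring

lemma hotelling_profit_le_of_best_response {t : ℝ} (ht : 0 < t) (c q p p₀ : ℝ)
    (hp₀ : p₀ = (c + q + t) / 2) :
    (p - c) * (1 / 2 + (q - p) / (2 * t)) ≤ (p₀ - c) * (1 / 2 + (q - p₀) / (2 * t)) := by
  rw [← sub_nonneg, hotelling_profit_sub_eq ht.ne' c q p p₀ hp₀]
  positivity

/-- Proposition 3: the equilibrium commuter prices are mutual best responses. -/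
theorem duopoly_onesided_best_responses
    (tC αW αN fWB fNB fWC fNC : ℝ)
    (htC : 0 < tC)
    (pWstar pNstar : ℝ)
    (hpW : pWstar = (fNC - αN) / 3 + 2 * (fWC - αW) / 3 + tC)
    (hpN : pNstar = 2 * (fNC - αN) / 3 + (fWC - αW) / 3 + tC) :
    (∀ p : ℝ,
      -fWB + (p + αW - fWC) * (1 / 2 + (pNstar - p) / (2 * tC))
        ≤ -fWB + (pWstar + αW - fWC) * (1 / 2 + (pNstar - pWstar) / (2 * tC))) ∧
    (∀ p : ℝ,
      -fNB + (p + αN - fNC) * (1 / 2 + (pWstar - p) / (2 * tC))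
        ≤ -fNB + (pNstar + αN - fNC) * (1 / 2 + (pWstar - pNstar) / (2 * tC))) := by
  have hW : pWstar = (fWC - αW + pNstar + tC) / 2 := by rw [hpW, hpN]; ring
  have hN : pNstar = (fNC - αN + pWstar + tC) / 2 := by rw [hpW, hpN]; ring
  refine ⟨fun p => ?_, fun p => ?_⟩
  · have h := hotelling_profit_le_of_best_response htC (fWC - αW) pNstar p pWstar hW
    simp only [sub_sub_eq_add_sub] at h
    exact add_le_add_right h _
  · have h := hotelling_profit_le_of_best_response htC (fNC - αN) pWstar p pNstar hN
    simp only [sub_sub_eq_add_sub] at h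
    exact add_le_add_right h _
end

section
/- (Proposition 3, equilibrium worksite prices and profits.) Let t^C > 0 and α_W, α_N, f_W^B, f_N^B, f_W^C, f_N^C be real numbers, set α⁻ = α_N − α_W, and let p_W* = (f_N^C − α_N)/3 + 2·(f_W^C − α_W)/3 + t^C and p_N* = 2·(f_N^C − α_N)/3 + (f_W^C − α_W)/3 + t^C. Then the WF commuter share is q_W^C = 1/2 + (p_N* − p_W*)/(2·t^C) = 1/2 + (f_N^C − f_W^C − α⁻)/(6·t^C), the full-extraction worksite prices are p_W^B = α_W·q_W^C = (1/2 + (f_N^C − f_W^C − α⁻)/(6·t^C))·α_W and p_N^B = α_N·(1 − q_W^C) = (1/2 + (f_W^C − f_N^C + α⁻)/(6·t^C))·α_N, and the equilibrium profits equal R_W = −f_W^B + ((f_N^C − f_W^C − α⁻)/(6·t^C) + 1/2)·((f_N^C − f_W^C − α⁻)/3 + t^C) and R_N = −f_N^B + ((f_W^C − f_N^C + α⁻)/(6·t^C) + 1/2)·((f_W^C − f_N^C + α⁻)/3 + t^C). -/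
/-!
Both equilibrium prices are affine in the net costs `f_W^C - α_W` and `f_N^C - α_N`, so everything
is governed by the single number `d = f_N^C - f_W^C - α⁻`: the price gap `p_N* - p_W*` is `d / 3`,
WF's margin over its net cost is `d / 3 + t^C` and NF's is `-d / 3 + t^C`. Substituting these into
the Hotelling share and into the profit formulas gives the closed forms.
-/

section OneSidedDuopoly

variable (tC αW αN fWC fNC : ℝ)

theorem equilibriumPrice_gap :
    (2 * (fNC - αN) / 3 + (fWC - αW) / 3 + tC) - ((fNC - αN) / 3 + 2 * (fWC - αW) / 3 + tC)
      = (fNC - fWC - (αN - αW)) / 3 := by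
  ring

theorem wfEquilibrium_margin :
    (fNC - αN) / 3 + 2 * (fWC - αW) / 3 + tC + αW - fWC = (fNC - fWC - (αN - αW)) / 3 + tC := by
  ring

theorem nfEquilibrium_margin :
    2 * (fNC - αN) / 3 + (fWC - αW) / 3 + tC + αN - fNC = (fWC - fNC + (αN - αW)) / 3 + tC := by
  ring

theorem hotellingShare_of_gap_div_three (d : ℝ) : 1 / 2 + d / 3 / (2 * tC) = 1 / 2 + d / (6 * tC) := by
  ring

theorem one_sub_hotellingShare (a b c : ℝ) :
    1 - (1 / 2 + (a - b - c) / (6 * tC)) = 1 / 2 + (b - a + c) / (6 * tC) := by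
  ring

end OneSidedDuopoly

theorem duopoly_onesided_equilibrium_values_general
    (tC αW αN fWB fNB fWC fNC : ℝ)
    (αm : ℝ) (hαm : αm = αN - αW)
    (pWstar pNstar : ℝ)
    (hpW : pWstar = (fNC - αN) / 3 + 2 * (fWC - αW) / 3 + tC)
    (hpN : pNstar = 2 * (fNC - αN) / 3 + (fWC - αW) / 3 + tC)
    (qWC : ℝ) (hq : qWC = 1 / 2 + (pNstar - pWstar) / (2 * tC)) :
    qWC = 1 / 2 + (fNC - fWC - αm) / (6 * tC) ∧
    αW * qWC = (1 / 2 + (fNC - fWC - αm) / (6 * tC)) * αW ∧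
    αN * (1 - qWC) = (1 / 2 + (fWC - fNC + αm) / (6 * tC)) * αN ∧
    -fWB + (pWstar + αW - fWC) * qWC
      = -fWB + ((fNC - fWC - αm) / (6 * tC) + 1 / 2) * ((fNC - fWC - αm) / 3 + tC) ∧
    -fNB + (pNstar + αN - fNC) * (1 - qWC)
      = -fNB + ((fWC - fNC + αm) / (6 * tC) + 1 / 2) * ((fWC - fNC + αm) / 3 + tC) := by
  subst hαm
  have hshare : qWC = 1 / 2 + (fNC - fWC - (αN - αW)) / (6 * tC) := by
    rw [hq, hpN, hpW, equilibriumPrice_gap, hotellingShare_of_gap_div_three]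
  have hshareN : 1 - qWC = 1 / 2 + (fWC - fNC + (αN - αW)) / (6 * tC) := by
    rw [hshare, one_sub_hotellingShare]
  refine ⟨hshare, by rw [hshare, mul_comm], by rw [hshareN, mul_comm], ?_, ?_⟩
  · rw [hpW, wfEquilibrium_margin, hshare, mul_comm, add_comm (1 / 2 : ℝ)]
  · rw [hpN, nfEquilibrium_margin, hshareN, mul_comm, add_comm (1 / 2 : ℝ)]

/-- Proposition 3: equilibrium commuter share, full-extraction worksite prices,
and profits in the one-sided duopoly model. -/
theorem duopoly_onesided_equilibrium_values
    (tC αW αN fWB fNB fWC fNC : ℝ)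
    (htC : 0 < tC)
    (αm : ℝ) (hαm : αm = αN - αW)
    (pWstar pNstar : ℝ)
    (hpW : pWstar = (fNC - αN) / 3 + 2 * (fWC - αW) / 3 + tC)
    (hpN : pNstar = 2 * (fNC - αN) / 3 + (fWC - αW) / 3 + tC)
    (qWC : ℝ) (hq : qWC = 1 / 2 + (pNstar - pWstar) / (2 * tC)) :
    qWC = 1 / 2 + (fNC - fWC - αm) / (6 * tC) ∧
    αW * qWC = (1 / 2 + (fNC - fWC - αm) / (6 * tC)) * αW ∧
    αN * (1 - qWC) = (1 / 2 + (fWC - fNC + αm) / (6 * tC)) * αN ∧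
    -fWB + (pWstar + αW - fWC) * qWC
      = -fWB + ((fNC - fWC - αm) / (6 * tC) + 1 / 2) * ((fNC - fWC - αm) / 3 + tC) ∧
    -fNB + (pNstar + αN - fNC) * (1 - qWC)
      = -fNB + ((fWC - fNC + αm) / (6 * tC) + 1 / 2) * ((fWC - fNC + αm) / 3 + tC) :=
  duopoly_onesided_equilibrium_values_general tC αW αN fWB fNB fWC fNC αm hαm pWstar pNstar hpW hpN
    qWC hq
end

section
/- (Maximal deviation profit when the WF CSP stops serving worksites.) Let t^C > 0 and α_W, α_N, f_W^C, f_N^C be real numbers, and let p_N* = 2·(f_N^C − α_N)/3 + (f_W^C − α_W)/3 + t^C be the NWF CSP's equilibrium commuter price. Then for every p ∈ ℝ, (p − f_W^C)·(1/2 + (p_N* − p)/(2·t^C)) ≤ (2·α_N + α_W − 2·f_N^C + 2·f_W^C − 6·t^C)²/(72·t^C), with equality at p = t^C + f_N^C/3 − α_N/3 + 2·f_W^C/3 − α_W/6; that is, the maximal profit the WF CSP can earn from commuters alone, when not serving worksites, equals R̃_W = (2·α_N + α_W − 2·f_N^C + 2·f_W^C − 6·t^C)²/(72·t^C). -/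
/-!
The WF CSP's commuter share is linear in its price `p`, so its profit `(p - c) · share` is a
concave quadratic in `p`. Completing the square gives the maximum `(t + q - c)² / (8 t)` at the
midpoint `p = (t + q + c) / 2` of its two roots; substituting the rival's equilibrium price
`q = p_N*` yields `R̃_W`.
-/

section HotellingProfit

variable {t : ℝ} (q c p : ℝ)

lemma hotelling_profit_eq_sub_sq (ht : t ≠ 0) :
    (p - c) * (1 / 2 + (q - p) / (2 * t))
      = (t + q - c) ^ 2 / (8 * t) - (2 * p - (t + q + c)) ^ 2 / (8 * t) := by
  field_simp
  ring

lemma hotelling_profit_le (ht : 0 < t) :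
    (p - c) * (1 / 2 + (q - p) / (2 * t)) ≤ (t + q - c) ^ 2 / (8 * t) := by
  rw [hotelling_profit_eq_sub_sq q c p ht.ne', sub_le_self_iff]
  positivity

lemma hotelling_profit_optimal_price (ht : t ≠ 0) :
    ((t + q + c) / 2 - c) * (1 / 2 + (q - (t + q + c) / 2) / (2 * t))
      = (t + q - c) ^ 2 / (8 * t) := by
  rw [hotelling_profit_eq_sub_sq q c _ ht]
  ring

end HotellingProfit

/-- Maximal deviation profit of the WF CSP when it stops serving worksites. -/
theorem deviation_profit_bound
    (tC αW αN fWC fNC : ℝ)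
    (htC : 0 < tC)
    (pNstar : ℝ)
    (hpN : pNstar = 2 * (fNC - αN) / 3 + (fWC - αW) / 3 + tC) :
    (∀ p : ℝ,
      (p - fWC) * (1 / 2 + (pNstar - p) / (2 * tC))
        ≤ (2 * αN + αW - 2 * fNC + 2 * fWC - 6 * tC) ^ 2 / (72 * tC)) ∧
    (tC + fNC / 3 - αN / 3 + 2 * fWC / 3 - αW / 6 - fWC)
        * (1 / 2 + (pNstar - (tC + fNC / 3 - αN / 3 + 2 * fWC / 3 - αW / 6)) / (2 * tC))
      = (2 * αN + αW - 2 * fNC + 2 * fWC - 6 * tC) ^ 2 / (72 * tC) := by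
  have hmax : (tC + pNstar - fWC) ^ 2 / (8 * tC)
      = (2 * αN + αW - 2 * fNC + 2 * fWC - 6 * tC) ^ 2 / (72 * tC) := by
    subst hpN
    field_simp
    ring
  have hprice : tC + fNC / 3 - αN / 3 + 2 * fWC / 3 - αW / 6 = (tC + pNstar + fWC) / 2 := by
    subst hpN
    ring
  refine ⟨fun p => hmax ▸ hotelling_profit_le pNstar fWC p htC, ?_⟩
  rw [hprice, ← hmax]
  exact hotelling_profit_optimal_price pNstar fWC htC.ne'
end
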